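/- arXiv:1604.08819 — 6 statements merged into one kernel-verified Lean document; each statement's English description precedes it below -/
import Mathlib

section
/- If c is an exact r-coloring of [N] with no rainbow 3-term arithmetic progression such that c(1) and c(N) are each used only once, then N is even. -/
/-- `c` restricted to `[n] = {1,…,n}` is an exact `r`-coloring: it maps `[n]` into
`{1,…,r}` and every color in `{1,…,r}` is used on `[n]`. -/
def ExactColoring (n r : ℕ) (c : ℕ → ℕ) : Prop :=
  (∀ x ∈ Finset.Icc 1 n, c x ∈ Finset.Icc 1 r) ∧
    ∀ j ∈ Finset.Icc 1 r, ∃ x ∈ Finset.Icc 1 n, c x = j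

/-- `[n]` contains a rainbow 3-term arithmetic progression under `c`. -/
def HasRainbowAP3 (n : ℕ) (c : ℕ → ℕ) : Prop :=
  ∃ a d : ℕ, 1 ≤ a ∧ 1 ≤ d ∧ a + 2 * d ≤ n ∧
    c a ≠ c (a + d) ∧ c a ≠ c (a + 2 * d) ∧ c (a + d) ≠ c (a + 2 * d)

/-- The anti-van der Waerden number `aw([n],3)`: the least `r` such that every exact
`r`-coloring of `[n]` contains a rainbow 3-AP. -/
noncomputable def aw (n : ℕ) : ℕ :=
  sInf {r | ∀ c : ℕ → ℕ, ExactColoring n r c → HasRainbowAP3 n c}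

/-- A coloring of `[n]` is unitary if some element of `[n]` is uniquely colored. -/
def UnitaryColoring (n : ℕ) (c : ℕ → ℕ) : Prop :=
  ∃ x ∈ Finset.Icc 1 n, ∀ y ∈ Finset.Icc 1 n, c y = c x → y = x

/-- The unitary anti-van der Waerden number `aw_u([n],3)`. -/
noncomputable def awU (n : ℕ) : ℕ :=
  sInf {r | ∀ c : ℕ → ℕ, ExactColoring n r c → UnitaryColoring n c → HasRainbowAP3 n c}

/-- An exact `r`-coloring of `ℤ_n`. -/
def ExactColoringZ (n r : ℕ) (c : ZMod n → ℕ) : Prop :=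
  (∀ x, c x ∈ Finset.Icc 1 r) ∧ ∀ j ∈ Finset.Icc 1 r, ∃ x, c x = j

/-- `ℤ_n` contains a rainbow 3-AP (three distinct elements, distinct colors) under `c`. -/
def HasRainbowAP3Z (n : ℕ) (c : ZMod n → ℕ) : Prop :=
  ∃ a d : ZMod n, d ≠ 0 ∧ a ≠ a + d ∧ a ≠ a + 2 * d ∧ a + d ≠ a + 2 * d ∧
    c a ≠ c (a + d) ∧ c a ≠ c (a + 2 * d) ∧ c (a + d) ≠ c (a + 2 * d)

/-- The anti-van der Waerden number `aw(ℤ_n,3)`. -/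
noncomputable def awZ (n : ℕ) : ℕ :=
  sInf {r | ∀ c : ZMod n → ℕ, ExactColoringZ n r c → HasRainbowAP3Z n c}

/-- A coloring `c` of `[N]` is special: `N = 7q+1`, the endpoints `1` and `N` are
uniquely colored, and there are colors `α`, `β` whose color classes are exactly
`{q+1, 2q+1, 4q+1}` and `{3q+1, 5q+1, 6q+1}`. -/
def SpecialColoring (N : ℕ) (c : ℕ → ℕ) : Prop :=
  ∃ q : ℕ, 1 ≤ q ∧ N = 7 * q + 1 ∧
    (∀ y ∈ Finset.Icc 1 N, c y = c 1 → y = 1) ∧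
    (∀ y ∈ Finset.Icc 1 N, c y = c N → y = N) ∧
    ∃ α β : ℕ,
      (Finset.Icc 1 N).filter (fun x => c x = α) = {q + 1, 2 * q + 1, 4 * q + 1} ∧
      (Finset.Icc 1 N).filter (fun x => c x = β) = {3 * q + 1, 5 * q + 1, 6 * q + 1}

theorem color_ne_of_uniquelyColored {N x y : ℕ} {c : ℕ → ℕ}
    (hx : ∀ z ∈ Finset.Icc 1 N, c z = c x → z = x) (hy : y ∈ Finset.Icc 1 N) (hyx : y ≠ x) :
    c x ≠ c y :=
  fun h => hyx (hx y hy h.symm)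

theorem hasRainbowAP3_of_odd_of_endpoints_uniquelyColored {N : ℕ} {c : ℕ → ℕ}
    (hN : 2 ≤ N) (hodd : Odd N)
    (h1 : ∀ y ∈ Finset.Icc 1 N, c y = c 1 → y = 1)
    (hNu : ∀ y ∈ Finset.Icc 1 N, c y = c N → y = N) :
    HasRainbowAP3 N c := by
  obtain ⟨k, rfl⟩ := hodd
  have hmid : 1 + k ∈ Finset.Icc 1 (2 * k + 1) := Finset.mem_Icc.mpr ⟨by omega, by omega⟩
  have hlast : 1 + 2 * k = 2 * k + 1 := by omega
  refine ⟨1, k, le_rfl, by omega, by omega, ?_, ?_, ?_⟩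
  · exact color_ne_of_uniquelyColored h1 hmid (by omega)
  · rw [hlast]
    exact color_ne_of_uniquelyColored h1 (Finset.right_mem_Icc.mpr (by omega)) (by omega)
  · rw [hlast]
    exact (color_ne_of_uniquelyColored hNu hmid (by omega)).symm

theorem stmt1_general (N : ℕ) (c : ℕ → ℕ) (hN : 2 ≤ N)
    (hnr : ¬ HasRainbowAP3 N c)
    (h1 : ∀ y ∈ Finset.Icc 1 N, c y = c 1 → y = 1)
    (hNu : ∀ y ∈ Finset.Icc 1 N, c y = c N → y = N) :
    Even N :=
  Nat.not_odd_iff_even.mp fun hodd =>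
    hnr (hasRainbowAP3_of_odd_of_endpoints_uniquelyColored hN hodd h1 hNu)

/-- an exact rainbow-3-AP-free coloring of `[N]` with uniquely colored
endpoints forces `N` even. -/
theorem stmt1 (N r : ℕ) (c : ℕ → ℕ) (hN : 2 ≤ N)
    (hc : ExactColoring N r c) (hnr : ¬ HasRainbowAP3 N c)
    (h1 : ∀ y ∈ Finset.Icc 1 N, c y = c 1 → y = 1)
    (hNu : ∀ y ∈ Finset.Icc 1 N, c y = c N → y = N) :
    Even N :=
  stmt1_general N c hN hnr h1 hNu
end

section
/- Let c be an exact r-coloring of [N] with no rainbow 3-AP in which 1 and N are uniquely colored. Then every color other than c(1) and c(N) is used on the subinterval I₂ = {⌈N/4⌉+1, ..., N/2} (using that N is even). -/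
/-
In a coloring without rainbow 3-APs, if an endpoint of a 3-AP is uniquely colored
and the middle term has another color, then the middle term and the other endpoint share a color.
Reflecting through `N` (`x ↦ 2x - N`) therefore moves any color other than `c N` into `[1, N/2]`,
and doubling from `1` (`x ↦ 2x - 1`) then pushes any color other than `c 1` up into
`(⌈N/4⌉, N/2]`. Evenness of `N` is what keeps the doubling step from overshooting `N/2`.
-/

def UniquelyColored (N : ℕ) (c : ℕ → ℕ) (x : ℕ) : Prop :=
  ∀ y ∈ Finset.Icc 1 N, c y = c x → y = x

section NoRainbowAP3

variable {N : ℕ} {c : ℕ → ℕ}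

theorem eq_or_eq_or_eq_of_not_hasRainbowAP3 (hnr : ¬ HasRainbowAP3 N c) {a m b : ℕ}
    (ha : 1 ≤ a) (ham : a < m) (hb : b ≤ N) (hamb : a + b = 2 * m) :
    c a = c m ∨ c a = c b ∨ c m = c b := by
  have hm : a + (m - a) = m := by omega
  have hb' : a + 2 * (m - a) = b := by omega
  by_contra! h
  exact hnr ⟨a, m - a, ha, by omega, by omega, by rw [hm]; exact h.1,
    by rw [hb']; exact h.2.1, by rw [hm, hb']; exact h.2.2⟩

theorem color_eq_of_uniquelyColored_left (hnr : ¬ HasRainbowAP3 N c) {a m b : ℕ}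
    (ha : 1 ≤ a) (ham : a < m) (hb : b ≤ N) (hamb : a + b = 2 * m)
    (huniq : UniquelyColored N c a) (hm : c m ≠ c a) : c m = c b := by
  have hab : c a ≠ c b := fun h =>
    absurd (huniq b (Finset.mem_Icc.2 ⟨by omega, hb⟩) h.symm) (by omega)
  rcases eq_or_eq_or_eq_of_not_hasRainbowAP3 hnr ha ham hb hamb with h | h | h
  · exact absurd h.symm hm
  · exact absurd h hab
  · exact h

theorem color_eq_of_uniquelyColored_right (hnr : ¬ HasRainbowAP3 N c) {a m b : ℕ}
    (ha : 1 ≤ a) (ham : a < m) (hb : b ≤ N) (hamb : a + b = 2 * m)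
    (huniq : UniquelyColored N c b) (hm : c m ≠ c b) : c a = c m := by
  have hab : c a ≠ c b := fun h =>
    absurd (huniq a (Finset.mem_Icc.2 ⟨ha, by omega⟩) h) (by omega)
  rcases eq_or_eq_or_eq_of_not_hasRainbowAP3 hnr ha ham hb hamb with h | h | h
  · exact h
  · exact absurd h hab
  · exact absurd h hm

theorem exists_mem_Icc_half_color_eq (hnr : ¬ HasRainbowAP3 N c)
    (hN : UniquelyColored N c N) {x : ℕ} (hx : x ∈ Finset.Icc 1 N) (hcx : c x ≠ c N) :
    ∃ y ∈ Finset.Icc 1 (N / 2), c y = c x := by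
  obtain ⟨hx1, hxN⟩ := Finset.mem_Icc.1 hx
  by_cases hhalf : x ≤ N / 2
  · exact ⟨x, Finset.mem_Icc.2 ⟨hx1, hhalf⟩, rfl⟩
  have hxne : x ≠ N := by rintro rfl; exact hcx rfl
  have hrefl : c (2 * x - N) = c x :=
    color_eq_of_uniquelyColored_right hnr (a := 2 * x - N) (by omega) (by omega) le_rfl
      (by omega) hN hcx
  obtain ⟨y, hy, hcy⟩ := exists_mem_Icc_half_color_eq hnr hN
    (x := 2 * x - N) (Finset.mem_Icc.2 ⟨by omega, by omega⟩) (hrefl ▸ hcx)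
  exact ⟨y, hy, hcy.trans hrefl⟩
termination_by x
decreasing_by omega

theorem exists_mem_Icc_color_eq_of_two_mul_le (hnr : ¬ HasRainbowAP3 N c)
    (h1 : UniquelyColored N c 1) {L M : ℕ} (hLM : 2 * L ≤ M + 1) (hMN : M ≤ N) {x : ℕ}
    (hx : x ∈ Finset.Icc 1 M) (hcx : c x ≠ c 1) :
    ∃ y ∈ Finset.Icc (L + 1) M, c y = c x := by
  obtain ⟨hx1, hxM⟩ := Finset.mem_Icc.1 hx
  by_cases hL : L < x
  · exact ⟨x, Finset.mem_Icc.2 ⟨hL, hxM⟩, rfl⟩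
  have hxne : x ≠ 1 := by rintro rfl; exact hcx rfl
  have hdbl : c (2 * x - 1) = c x :=
    (color_eq_of_uniquelyColored_left hnr (b := 2 * x - 1) le_rfl (by omega) (by omega)
      (by omega) h1 hcx).symm
  obtain ⟨y, hy, hcy⟩ := exists_mem_Icc_color_eq_of_two_mul_le hnr h1 hLM hMN
    (x := 2 * x - 1) (Finset.mem_Icc.2 ⟨by omega, by omega⟩) (hdbl ▸ hcx)
  exact ⟨y, hy, hcy.trans hdbl⟩
termination_by M - x
decreasing_by omega

end NoRainbowAP3

theorem stmt2_general (N r : ℕ) (c : ℕ → ℕ) (hNe : Even N)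
    (hc : ExactColoring N r c) (hnr : ¬ HasRainbowAP3 N c)
    (h1 : ∀ y ∈ Finset.Icc 1 N, c y = c 1 → y = 1)
    (hNu : ∀ y ∈ Finset.Icc 1 N, c y = c N → y = N) :
    ∀ j ∈ Finset.Icc 1 r, j ≠ c 1 → j ≠ c N →
      ∃ x ∈ Finset.Icc ((N + 3) / 4 + 1) (N / 2), c x = j := by
  intro j hj hj1 hjN
  obtain ⟨x, hx, rfl⟩ := hc.2 j hj
  obtain ⟨y, hy, hcy⟩ := exists_mem_Icc_half_color_eq hnr hNu hx hjN
  obtain ⟨k, rfl⟩ := hNe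
  obtain ⟨z, hz, hcz⟩ := exists_mem_Icc_color_eq_of_two_mul_le hnr h1
    (L := (k + k + 3) / 4) (by omega) (by omega) hy (hcy ▸ hj1)
  exact ⟨z, hz, hcz.trans hcy⟩

/-- every color other than `c 1` and `c N` is used on
`I₂ = {⌈N/4⌉+1, …, N/2}` (with `N` even). -/
theorem stmt2 (N r : ℕ) (c : ℕ → ℕ) (hN : 1 ≤ N) (hNe : Even N)
    (hc : ExactColoring N r c) (hnr : ¬ HasRainbowAP3 N c)
    (h1 : ∀ y ∈ Finset.Icc 1 N, c y = c 1 → y = 1)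
    (hNu : ∀ y ∈ Finset.Icc 1 N, c y = c N → y = N) :
    ∀ j ∈ Finset.Icc 1 r, j ≠ c 1 → j ≠ c N →
      ∃ x ∈ Finset.Icc ((N + 3) / 4 + 1) (N / 2), c x = j :=
  stmt2_general N r c hNe hc hnr h1 hNu
end

section
/- Every 4-coloring of a 9-term arithmetic progression inside [n], under a coloring of [n] with no rainbow 3-AP, is impossible when all 4 colors appear on the 9-AP: explicitly, since aw([9],3) = 4, any exact 4-coloring of a 9-term arithmetic progression contains three of its terms forming a rainbow 3-AP. -/
/-!
That every coloring of `[9]` with exactly four colors has a rainbow 3-AP (`aw([9],3) ≤ 4`) is a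
finite check: grow a coloring one term at a time, abandon it as soon as a rainbow 3-AP appears,
and verify that every surviving coloring of length nine misses a color. At least four colors on
the progression can be merged into exactly four, and merging colors creates no rainbow AP.
-/

namespace RainbowAP3

variable {α β : Type*}

def Rainbow (x y z : α) : Prop := x ≠ y ∧ x ≠ z ∧ y ≠ z

instance [DecidableEq α] (x y z : α) : Decidable (Rainbow x y z) :=
  inferInstanceAs (Decidable (_ ∧ _ ∧ _))

theorem Rainbow.of_comp {g : α → β} {x y z : α} (h : Rainbow (g x) (g y) (g z)) :
    Rainbow x y z :=
  ⟨fun e => h.1 (congrArg g e), fun e => h.2.1 (congrArg g e), fun e => h.2.2 (congrArg g e)⟩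

def HasRainbowAP3Below (v : ℕ → α) (n : ℕ) : Prop :=
  ∃ a d, 0 < d ∧ a + 2 * d < n ∧ Rainbow (v a) (v (a + d)) (v (a + 2 * d))

theorem HasRainbowAP3Below.of_comp {g : α → β} {v : ℕ → α} {n : ℕ}
    (h : HasRainbowAP3Below (g ∘ v) n) : HasRainbowAP3Below v n :=
  let ⟨a, d, hd, hn, hrb⟩ := h
  ⟨a, d, hd, hn, Rainbow.of_comp (g := g) hrb⟩

section Search

variable [DecidableEq α]

/-- Called as `noRainbowFrom x l l`: the second list advances two steps for every step of the
first, so this walks the 3-APs `x, l[i], l[2 * i + 1]` of `x :: l` that start at `x`. -/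
def noRainbowFrom (x : α) : List α → List α → Bool
  | y :: ys, _ :: z :: zs => !decide (Rainbow x y z) && noRainbowFrom x ys zs
  | _, _ => true

theorem exists_rainbow_of_noRainbowFrom_eq_false {x : α} :
    ∀ {ys zs : List α}, noRainbowFrom x ys zs = false →
      ∃ i y z, ys[i]? = some y ∧ zs[2 * i + 1]? = some z ∧ Rainbow x y z
  | y :: ys, _ :: z :: zs, h => by
    rw [noRainbowFrom, Bool.and_eq_false_iff, Bool.not_eq_false', decide_eq_true_iff] at h
    rcases h with hrb | h
    · exact ⟨0, y, z, rfl, rfl, hrb⟩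
    · obtain ⟨i, y', z', hy, hz, hrb⟩ := exists_rainbow_of_noRainbowFrom_eq_false h
      exact ⟨i + 1, y', z', hy, hz, hrb⟩
  | [], _, h | _ :: _, [], h | _ :: _, [_], h => by simp [noRainbowFrom] at h

/-- The search prepends `k` further colors to `l`, pruning a branch as soon as a rainbow 3-AP
appears; the coloring `i ↦ l[i]` sits at positions `k, k + 1, …` of the final one. -/
def allRainbowFreeExtensionsMissColor (r : ℕ) : ℕ → List (Fin r) → Bool
  | 0, l => (List.finRange r).any fun j => j ∉ l
  | k + 1, l => (List.finRange r).all fun x =>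
      !noRainbowFrom x l l || allRainbowFreeExtensionsMissColor r k (x :: l)

theorem hasRainbowAP3Below_of_allRainbowFreeExtensionsMissColor {r k : ℕ} {l : List (Fin r)}
    (h : allRainbowFreeExtensionsMissColor r k l = true) {w : ℕ → Fin r}
    (hwl : (List.range l.length).map (fun i => w (k + i)) = l)
    (hw : ∀ j, ∃ i < k + l.length, w i = j) : HasRainbowAP3Below w (k + l.length) := by
  induction k generalizing l with
  | zero =>
    simp only [allRainbowFreeExtensionsMissColor, List.any_eq_true, List.mem_finRange,
      true_and, decide_eq_true_iff] at h
    obtain ⟨j, hj⟩ := h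
    obtain ⟨i, hi, rfl⟩ := hw j
    exact absurd (hwl ▸ List.mem_map.2 ⟨i, List.mem_range.2 (by omega), by simp⟩) hj
  | succ k ih =>
    have hwl' : (List.range (w k :: l).length).map (fun i => w (k + i)) = w k :: l := by
      rw [List.length_cons, List.range_succ_eq_map, List.map_cons, List.map_map]
      conv_rhs => rw [← hwl]
      congr 2
      funext i
      exact congrArg w (by omega)
    have hlen : k + 1 + l.length = k + (w k :: l).length := by simp only [List.length_cons]; omega
    simp only [allRainbowFreeExtensionsMissColor, List.all_eq_true, List.mem_finRange,
      forall_const, Bool.or_eq_true, Bool.not_eq_true'] at h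
    rcases h (w k) with hfree | hext
    · obtain ⟨i, y, z, hy, hz, hrb⟩ := exists_rainbow_of_noRainbowFrom_eq_false hfree
      have hi : 2 * i + 1 < l.length := by
        by_contra hi
        simp [List.getElem?_eq_none (show l.length ≤ 2 * i + 1 by omega)] at hz
      rw [← hwl, List.getElem?_map, List.getElem?_range (by omega), Option.map_some,
        Option.some_inj] at hy hz
      subst hy hz
      refine ⟨k, i + 1, by omega, by omega, ?_⟩
      rwa [show k + (i + 1) = k + 1 + i by omega,
        show k + 2 * (i + 1) = k + 1 + (2 * i + 1) by omega]
    · rw [hlen]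
      exact ih hext hwl' fun j => (hw j).imp fun _ ⟨hi, hij⟩ => ⟨hlen ▸ hi, hij⟩

theorem hasRainbowAP3Below_nine {v : ℕ → Fin 4} (hv : ∀ j, ∃ i < 9, v i = j) :
    HasRainbowAP3Below v 9 := by
  have hsearch : allRainbowFreeExtensionsMissColor 4 8 [0] = true := by decide +kernel
  -- permuting the colors, the last term may be assumed to have color `0`
  let σ := Equiv.swap (v 8) 0
  refine HasRainbowAP3Below.of_comp (g := σ) <|
    hasRainbowAP3Below_of_allRainbowFreeExtensionsMissColor hsearch (by simp [σ]) fun j => ?_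
  obtain ⟨i, hi, hij⟩ := hv (σ.symm j)
  exact ⟨i, hi, by simp [hij]⟩

end Search

theorem exists_surjOn_fin_of_le_card {s : Finset β} {r : ℕ} [NeZero r] (h : r ≤ s.card) :
    ∃ g : β → Fin r, Set.SurjOn g s Set.univ := by
  obtain ⟨f⟩ : Nonempty (Fin r ↪ s) :=
    Function.Embedding.nonempty_of_card_le (by simpa using h)
  have hf : Function.Injective fun j => (f j : β) := fun _ _ e => f.injective (Subtype.ext e)
  exact ⟨Function.invFun fun j => (f j : β), fun j _ =>
    ⟨f j, (f j).2, Function.leftInverse_invFun hf j⟩⟩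

theorem hasRainbowAP3Below_nine_of_four_le_card [DecidableEq β] {v : ℕ → β}
    (hv : 4 ≤ ((Finset.range 9).image v).card) : HasRainbowAP3Below v 9 := by
  obtain ⟨g, hg⟩ := exists_surjOn_fin_of_le_card hv
  refine HasRainbowAP3Below.of_comp (g := g) <| hasRainbowAP3Below_nine fun j => ?_
  obtain ⟨_, hx, rfl⟩ := hg (Set.mem_univ j)
  obtain ⟨i, hi, rfl⟩ := Finset.mem_image.1 hx
  exact ⟨i, Finset.mem_range.1 hi, rfl⟩

end RainbowAP3

theorem stmt12_general (a d : ℕ) (c : ℕ → ℕ)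
    (h4 : ((Finset.range 9).image fun i => c (a + i * d)).card = 4) :
    ∃ i j k : ℕ, i < j ∧ j < k ∧ k ≤ 8 ∧ j - i = k - j ∧
      c (a + i * d) ≠ c (a + j * d) ∧ c (a + i * d) ≠ c (a + k * d) ∧
      c (a + j * d) ≠ c (a + k * d) := by
  obtain ⟨i, e, he, hie, hne₁, hne₂, hne₃⟩ :=
    RainbowAP3.hasRainbowAP3Below_nine_of_four_le_card h4.ge
  exact ⟨i, i + e, i + 2 * e, by omega, by omega, by omega, by omega, hne₁, hne₂, hne₃⟩

/-- any coloring using exactly 4 colors on a 9-term arithmetic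
progression in `[n]` contains three of its terms, in arithmetic progression, that are
rainbow (pairwise distinctly colored). -/
theorem stmt12 (n a d : ℕ) (c : ℕ → ℕ) (ha : 1 ≤ a) (hd : 1 ≤ d) (h8 : a + 8 * d ≤ n)
    (h4 : ((Finset.range 9).image fun i => c (a + i * d)).card = 4) :
    ∃ i j k : ℕ, i < j ∧ j < k ∧ k ≤ 8 ∧ j - i = k - j ∧
      c (a + i * d) ≠ c (a + j * d) ∧ c (a + i * d) ≠ c (a + k * d) ∧
      c (a + j * d) ≠ c (a + k * d) :=
  stmt12_general a d c h4
end

section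
/- Let c be an exact r-coloring of [N] with no rainbow 3-AP in which 1 and N are uniquely colored, and suppose N ≡ 1 (mod 3). Then the set of colors appearing on {x ∈ [N] : x ≡ 1 (mod 3)} has size at least r − 1. -/
/-! In coordinates `t = x - 1 ∈ [0, M]` (so `N = M + 1` and `3 ∣ M`) the class `x ≡ 1 (mod 3)` is
`t ≡ 0`. Since the endpoints are uniquely colored, the progressions `0, t, 2t` and `2t - M, t, M`
are not rainbow, so doubling modulo `M` preserves colors. Doubling carries every `t ≢ 0` into the
middle third `[M/3, 2M/3]` and keeps it `≢ 0`. If two middle-third points `p, q` had distinct colors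
missing from the class `t ≡ 0`, then, after doubling one of them when `p ≡ q`, they would give `x, y`
with `2y - x ∈ [0, M]` and `2y - x ≡ 0`, so `x, y, 2y - x` would be rainbow. Hence at most one
color is missing from that class. -/

def residueOneColors (N : ℕ) (c : ℕ → ℕ) : Finset ℕ :=
  ((Finset.Icc 1 N).filter fun x => x % 3 = 1).image c

lemma apply_mem_residueOneColors {N x : ℕ} {c : ℕ → ℕ} (hx : 1 ≤ x) (hxN : x ≤ N)
    (hx3 : x % 3 = 1) : c x ∈ residueOneColors N c :=
  Finset.mem_image_of_mem c (Finset.mem_filter.2 ⟨Finset.mem_Icc.2 ⟨hx, hxN⟩, hx3⟩)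

lemma hasRainbowAP3_of_add_eq_two_mul {N a b e : ℕ} {c : ℕ → ℕ} (ha : 1 ≤ a) (he : 1 ≤ e)
    (haN : a ≤ N) (heN : e ≤ N) (hae : a ≠ e) (hmid : a + e = 2 * b)
    (hab : c a ≠ c b) (hace : c a ≠ c e) (hbe : c b ≠ c e) : HasRainbowAP3 N c := by
  rcases Nat.lt_or_gt_of_ne hae with h | h
  · refine ⟨a, b - a, ha, by omega, by omega, ?_⟩
    rw [show a + (b - a) = b by omega, show a + 2 * (b - a) = e by omega]
    exact ⟨hab, hace, hbe⟩
  · refine ⟨e, b - e, he, by omega, by omega, ?_⟩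
    rw [show e + (b - e) = b by omega, show e + 2 * (b - e) = a by omega]
    exact ⟨hbe.symm, hace.symm, hab.symm⟩

/-- `2t` folded back into `[0, M]`: this is `2t mod M` except at `2t = M`. -/
def doubleMod (M t : ℕ) : ℕ :=
  if 2 * t ≤ M then 2 * t else 2 * t - M

section EndpointsUnique

variable {M : ℕ} {c : ℕ → ℕ}

lemma color_doubleMod (hnr : ¬ HasRainbowAP3 (M + 1) c)
    (h1 : ∀ y ∈ Finset.Icc 1 (M + 1), c y = c 1 → y = 1)
    (hNu : ∀ y ∈ Finset.Icc 1 (M + 1), c y = c (M + 1) → y = M + 1)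
    {t : ℕ} (ht : t ≤ M) : c (doubleMod M t + 1) = c (t + 1) := by
  unfold doubleMod
  split_ifs with h2t
  · rcases Nat.eq_zero_or_pos t with rfl | ht0
    · rfl
    by_contra hne
    refine hnr (hasRainbowAP3_of_add_eq_two_mul (b := t + 1) le_rfl (by omega) (by omega)
      (by omega) (by omega) (by omega) (fun h => ?_) (fun h => ?_) (Ne.symm hne))
    · have := h1 (t + 1) (Finset.mem_Icc.2 ⟨by omega, by omega⟩) h.symm; omega
    · have := h1 (2 * t + 1) (Finset.mem_Icc.2 ⟨by omega, by omega⟩) h.symm; omega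
  · rcases Nat.lt_or_ge t M with htM | htM
    swap
    · rw [show 2 * t - M = t by omega]
    by_contra hne
    refine hnr (hasRainbowAP3_of_add_eq_two_mul (b := t + 1) (e := M + 1) (by omega) (by omega)
      (by omega) le_rfl (by omega) (by omega) hne (fun h => ?_) (fun h => ?_))
    · have := hNu (2 * t - M + 1) (Finset.mem_Icc.2 ⟨by omega, by omega⟩) h; omega
    · have := hNu (t + 1) (Finset.mem_Icc.2 ⟨by omega, by omega⟩) h; omega

/-- Doubling outside the middle third doubles the distance `min t (M - t)` to the endpoints. -/
theorem exists_middleThird_color_eq (hM : M % 3 = 0) (hnr : ¬ HasRainbowAP3 (M + 1) c)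
    (h1 : ∀ y ∈ Finset.Icc 1 (M + 1), c y = c 1 → y = 1)
    (hNu : ∀ y ∈ Finset.Icc 1 (M + 1), c y = c (M + 1) → y = M + 1)
    {t : ℕ} (ht : t ≤ M) (ht3 : t % 3 ≠ 0) :
    ∃ p, M ≤ 3 * p ∧ 3 * p ≤ 2 * M ∧ c (p + 1) = c (t + 1) := by
  by_cases hmid : M ≤ 3 * t ∧ 3 * t ≤ 2 * M
  · exact ⟨t, hmid.1, hmid.2, rfl⟩
  have hd : doubleMod M t ≤ M ∧ doubleMod M t % 3 ≠ 0 := by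
    unfold doubleMod; split_ifs <;> omega
  obtain ⟨p, hp, hp', hpc⟩ := exists_middleThird_color_eq hM hnr h1 hNu hd.1 hd.2
  exact ⟨p, hp, hp', hpc.trans (color_doubleMod hnr h1 hNu ht)⟩
termination_by M - min t (M - t)
decreasing_by unfold doubleMod; split_ifs <;> omega

lemma hasRainbowAP3_of_not_mem_residueOneColors {x y : ℕ} (hxM : x ≤ M) (hx : x ≤ 2 * y)
    (hy : 2 * y ≤ M + x) (h3 : (x + y) % 3 = 0) (hxy : c (x + 1) ≠ c (y + 1))
    (hxT : c (x + 1) ∉ residueOneColors (M + 1) c)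
    (hyT : c (y + 1) ∉ residueOneColors (M + 1) c) : HasRainbowAP3 (M + 1) c := by
  have hz : c (2 * y - x + 1) ∈ residueOneColors (M + 1) c :=
    apply_mem_residueOneColors (by omega) (by omega) (by omega)
  have hxy' : x ≠ y := fun h => hxy (h ▸ rfl)
  exact hasRainbowAP3_of_add_eq_two_mul (b := y + 1) (e := 2 * y - x + 1) (by omega) (by omega)
    (by omega) (by omega) (by omega) (by omega) hxy (fun h => hxT (h ▸ hz)) (fun h => hyT (h ▸ hz))

theorem color_eq_of_middleThird (hM : M % 3 = 0) (hnr : ¬ HasRainbowAP3 (M + 1) c)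
    (h1 : ∀ y ∈ Finset.Icc 1 (M + 1), c y = c 1 → y = 1)
    (hNu : ∀ y ∈ Finset.Icc 1 (M + 1), c y = c (M + 1) → y = M + 1)
    {p q : ℕ} (hp : M ≤ 3 * p) (hp' : 3 * p ≤ 2 * M) (hq : M ≤ 3 * q) (hq' : 3 * q ≤ 2 * M)
    (hpT : c (p + 1) ∉ residueOneColors (M + 1) c)
    (hqT : c (q + 1) ∉ residueOneColors (M + 1) c) : c (p + 1) = c (q + 1) := by
  wlog hpq : p ≤ q generalizing p q
  · exact (this hq hq' hp hp' hqT hpT (by omega)).symm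
  have hp3 : p % 3 ≠ 0 := fun h => hpT (apply_mem_residueOneColors (by omega) (by omega) (by omega))
  have hq3 : q % 3 ≠ 0 := fun h => hqT (apply_mem_residueOneColors (by omega) (by omega) (by omega))
  by_contra hne
  apply hnr
  by_cases hres : p % 3 = q % 3
  swap
  · have hsum : (p + q) % 3 = 0 := by
      rcases (by omega : p % 3 = 1 ∧ q % 3 = 2 ∨ p % 3 = 2 ∧ q % 3 = 1) with h | h <;> omega
    exact hasRainbowAP3_of_not_mem_residueOneColors (by omega) (by omega) (by omega) hsum
      hne hpT hqT
  -- `p ≡ q`: replace one of them by its double, which has the same color and residue `-p`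
  by_cases hq2 : 2 * q ≤ M
  · have hx := color_doubleMod hnr h1 hNu (t := p) (by omega)
    rw [doubleMod, if_pos (by omega)] at hx
    exact hasRainbowAP3_of_not_mem_residueOneColors (x := 2 * p) (y := q) (by omega) (by omega)
      (by omega) (by omega) (hx ▸ hne) (hx ▸ hpT) hqT
  · have hx := color_doubleMod hnr h1 hNu (t := q) (by omega)
    rw [doubleMod, if_neg hq2] at hx
    exact hasRainbowAP3_of_not_mem_residueOneColors (x := 2 * q - M) (y := p) (by omega)
      (by omega) (by omega) (by omega) (hx ▸ Ne.symm hne) (hx ▸ hqT) hpT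

theorem color_eq_of_not_mem_residueOneColors (hM : M % 3 = 0) (hnr : ¬ HasRainbowAP3 (M + 1) c)
    (h1 : ∀ y ∈ Finset.Icc 1 (M + 1), c y = c 1 → y = 1)
    (hNu : ∀ y ∈ Finset.Icc 1 (M + 1), c y = c (M + 1) → y = M + 1)
    {s t : ℕ} (hs : s ≤ M) (ht : t ≤ M)
    (hsT : c (s + 1) ∉ residueOneColors (M + 1) c)
    (htT : c (t + 1) ∉ residueOneColors (M + 1) c) : c (s + 1) = c (t + 1) := by
  have hs3 : s % 3 ≠ 0 := fun h => hsT (apply_mem_residueOneColors (by omega) (by omega) (by omega))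
  have ht3 : t % 3 ≠ 0 := fun h => htT (apply_mem_residueOneColors (by omega) (by omega) (by omega))
  obtain ⟨p, hp, hp', hpc⟩ := exists_middleThird_color_eq hM hnr h1 hNu hs hs3
  obtain ⟨q, hq, hq', hqc⟩ := exists_middleThird_color_eq hM hnr h1 hNu ht ht3
  rw [← hpc] at hsT ⊢
  rw [← hqc] at htT ⊢
  exact color_eq_of_middleThird hM hnr h1 hNu hp hp' hq hq' hsT htT

end EndpointsUnique

/-- if `N ≡ 1 (mod 3)`, then at least `r - 1` colors appear on
`{x ∈ [N] : x ≡ 1 (mod 3)}`. -/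
theorem stmt13 (N r : ℕ) (c : ℕ → ℕ) (hN : N % 3 = 1)
    (hc : ExactColoring N r c) (hnr : ¬ HasRainbowAP3 N c)
    (h1 : ∀ y ∈ Finset.Icc 1 N, c y = c 1 → y = 1)
    (hNu : ∀ y ∈ Finset.Icc 1 N, c y = c N → y = N) :
    r - 1 ≤ (((Finset.Icc 1 N).filter fun x => x % 3 = 1).image c).card := by
  obtain ⟨M, rfl⟩ : ∃ M, N = M + 1 := ⟨N - 1, by omega⟩
  have hcolor : ∀ j ∈ Finset.Icc 1 r, ∃ s ≤ M, c (s + 1) = j := by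
    intro j hj
    obtain ⟨x, hx, rfl⟩ := hc.2 j hj
    rw [Finset.mem_Icc] at hx
    exact ⟨x - 1, by omega, by rw [Nat.sub_add_cancel hx.1]⟩
  have hmissing : (Finset.Icc 1 r \ residueOneColors (M + 1) c).card ≤ 1 := by
    refine Finset.card_le_one.2 fun a ha b hb => ?_
    rw [Finset.mem_sdiff] at ha hb
    obtain ⟨s, hs, rfl⟩ := hcolor a ha.1
    obtain ⟨t, ht, rfl⟩ := hcolor b hb.1
    exact color_eq_of_not_mem_residueOneColors (by omega) hnr h1 hNu hs ht ha.2 hb.2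
  have := Finset.le_card_sdiff (residueOneColors (M + 1) c) (Finset.Icc 1 r)
  rw [Nat.card_Icc] at this
  change r - 1 ≤ (residueOneColors (M + 1) c).card
  omega
end

section
/- Let c be a coloring of [N] with no rainbow 3-AP that is special with N = 7q+1, 8-AP {1, r₁, r₂, b₁, r₃, b₂, b₃, N} where r₁ = q+1, r₂ = 2q+1, b₁ = 3q+1, r₃ = 4q+1, b₂ = 5q+1, b₃ = 6q+1. Then c(r₁ + i) = c(r₁ − i) for i = 1, ..., q−1. -/
theorem color_add_eq_color_sub_of_not_hasRainbowAP3 {N m i : ℕ} {c : ℕ → ℕ}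
    (hnr : ¬ HasRainbowAP3 N c) (hi : 1 ≤ i) (him : i < m) (hmN : m + i ≤ N)
    (hl : c (m - i) ≠ c m) (hr : c (m + i) ≠ c m) : c (m + i) = c (m - i) := by
  by_contra hne
  have hmid : m - i + i = m := by omega
  have hend : m - i + 2 * i = m + i := by omega
  exact hnr ⟨m - i, i, by omega, hi, by omega, by rwa [hmid], by rw [hend]; exact Ne.symm hne,
    by rw [hmid, hend]; exact hr.symm⟩

theorem stmt14_general (N q : ℕ) (c : ℕ → ℕ) (red : ℕ) (hN : N = 7 * q + 1)
    (hnr : ¬ HasRainbowAP3 N c)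
    (hred : (Finset.Icc 1 N).filter (fun x => c x = red) = {q + 1, 2 * q + 1, 4 * q + 1}) :
    ∀ i : ℕ, 1 ≤ i → i ≤ q - 1 → c (q + 1 + i) = c (q + 1 - i) := by
  have mem_red {x : ℕ} : 1 ≤ x → x ≤ N → (c x = red ↔ x = q + 1 ∨ x = 2 * q + 1 ∨ x = 4 * q + 1) :=
    fun hx1 hxN => by simpa [hx1, hxN] using congrArg (x ∈ ·) hred
  intro i hi hiq
  have hcenter : c (q + 1) = red := (mem_red (by omega) (by omega)).mpr (Or.inl rfl)
  -- `q + 1` is the only red point of `[1, 2q]`, so both neighbours differ in color from it.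
  refine color_add_eq_color_sub_of_not_hasRainbowAP3 hnr hi (by omega) (by omega) ?_ ?_
  · rw [hcenter, Ne, mem_red (by omega) (by omega)]; omega
  · rw [hcenter, Ne, mem_red (by omega) (by omega)]; omega

/-- mirror symmetry around `r₁ = q+1` in a special rainbow-free
coloring: `c (q+1+i) = c (q+1-i)` for `i = 1, …, q-1`. -/
theorem stmt14 (N q : ℕ) (c : ℕ → ℕ) (red blue : ℕ) (hq : 1 ≤ q) (hN : N = 7 * q + 1)
    (hnr : ¬ HasRainbowAP3 N c)
    (h1 : ∀ y ∈ Finset.Icc 1 N, c y = c 1 → y = 1)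
    (hNu : ∀ y ∈ Finset.Icc 1 N, c y = c N → y = N)
    (hred : (Finset.Icc 1 N).filter (fun x => c x = red) = {q + 1, 2 * q + 1, 4 * q + 1})
    (hblue : (Finset.Icc 1 N).filter (fun x => c x = blue) = {3 * q + 1, 5 * q + 1, 6 * q + 1}) :
    ∀ i : ℕ, 1 ≤ i → i ≤ q - 1 → c (q + 1 + i) = c (q + 1 - i) :=
  stmt14_general N q c red hN hnr hred
end

section
/- Suppose c is a special rainbow-3-AP-free coloring of an interval of length N = 7q+1 contained in [n] containing all r colors of an exact r-coloring of [n] with no rainbow 3-AP. If n ≥ 9q, then [n] contains a rainbow 3-AP, a contradiction; hence n ≤ 9q − 1. -/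
/-!
Along the progression `n₁, n₁ + q, …, n₁ + 7q` a special colouring reads `A R R B R B B Z` with
`A, Z ∉ {R, B}`. If `n ≥ 9q`, then `n₁ - q` or `n₁ + 8q` lies in `[n]` (the latter whenever
`n₁ ≤ q`), so the progression extends by one term inside `[n]`; whatever colour that term gets,
one of three 3-APs of the 9-term progression is rainbow.
-/

def IsRainbowAP3 (f : ℕ → ℕ) (a d : ℕ) : Prop :=
  f a ≠ f (a + d) ∧ f a ≠ f (a + 2 * d) ∧ f (a + d) ≠ f (a + 2 * d)

theorem hasRainbowAP3_of_progression {n a q L i d : ℕ} {c : ℕ → ℕ} (ha : 1 ≤ a) (hq : 1 ≤ q)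
    (hn : a + L * q ≤ n) (hd : 0 < d) (hL : i + 2 * d ≤ L)
    (h : IsRainbowAP3 (fun k => c (a + k * q)) i d) : HasRainbowAP3 n c := by
  have hdq : 1 ≤ d * q := Nat.one_le_iff_ne_zero.mpr (by positivity)
  have hLq : (i + 2 * d) * q ≤ L * q := Nat.mul_le_mul_right q hL
  refine ⟨a + i * q, d * q, by omega, hdq, by linarith [hLq], ?_⟩
  simpa only [IsRainbowAP3, add_mul, mul_assoc, add_assoc] using h

/-- `w k` is the colour of `n₁ + k q` in a special colouring. -/
def IsSpecialWord (w : ℕ → ℕ) : Prop :=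
  ∃ R B, R ≠ B ∧ w 0 ≠ R ∧ w 0 ≠ B ∧ w 1 = R ∧ w 2 = R ∧ w 3 = B ∧ w 4 = R ∧ w 5 = B ∧
    w 6 = B ∧ w 7 ≠ R ∧ w 7 ≠ B

namespace IsSpecialWord

variable {w : ℕ → ℕ}

theorem exists_isRainbowAP3 (hw : IsSpecialWord w) :
    ∃ i d, 0 < d ∧ i + 2 * d ≤ 8 ∧ IsRainbowAP3 w i d := by
  obtain ⟨R, B, hRB, h0R, h0B, h1, h2, h3, h4, h5, h6, h7R, h7B⟩ := hw
  by_cases h8B : w 8 = B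
  · exact ⟨0, 4, by norm_num, by norm_num, by simp [IsRainbowAP3, h4, h8B, h0R, h0B, hRB]⟩
  by_cases h8R : w 8 = R
  · exact ⟨6, 1, by norm_num, by norm_num,
      by simp [IsRainbowAP3, h6, h8R, Ne.symm h7B, hRB.symm, h7R]⟩
  exact ⟨2, 3, by norm_num, by norm_num,
    by simp [IsRainbowAP3, h2, h5, hRB, Ne.symm h8R, Ne.symm h8B]⟩

theorem exists_isRainbowAP3_of_succ {v : ℕ → ℕ} (hw : IsSpecialWord fun k => v (k + 1)) :
    ∃ i d, 0 < d ∧ i + 2 * d ≤ 8 ∧ IsRainbowAP3 v i d := by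
  obtain ⟨R, B, hRB, h1R, h1B, h2, h3, h4, h5, h6, h7, h8R, h8B⟩ := hw
  by_cases h0R : v 0 = R
  · exact ⟨0, 4, by norm_num, by norm_num,
      by simp [IsRainbowAP3, h0R, h4, hRB, Ne.symm h8R, Ne.symm h8B]⟩
  by_cases h0B : v 0 = B
  · exact ⟨0, 1, by norm_num, by norm_num,
      by simp [IsRainbowAP3, h0B, h2, Ne.symm h1B, hRB.symm, h1R]⟩
  exact ⟨0, 3, by norm_num, by norm_num, by simp [IsRainbowAP3, h3, h6, h0R, h0B, hRB]⟩

end IsSpecialWord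

theorem isSpecialWord_of_special_block {c : ℕ → ℕ} {a q red blue : ℕ} (hq : 1 ≤ q)
    (h1 : ∀ y ∈ Finset.Icc a (a + 7 * q), c y = c a → y = a)
    (h2 : ∀ y ∈ Finset.Icc a (a + 7 * q), c y = c (a + 7 * q) → y = a + 7 * q)
    (hred : (Finset.Icc a (a + 7 * q)).filter (fun x => c x = red) =
      {a + q, a + 2 * q, a + 4 * q})
    (hblue : (Finset.Icc a (a + 7 * q)).filter (fun x => c x = blue) =
      {a + 3 * q, a + 5 * q, a + 6 * q}) :
    IsSpecialWord fun k => c (a + k * q) := by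
  have mem : ∀ k ≤ 7, a + k * q ∈ Finset.Icc a (a + 7 * q) := fun k hk => by
    simp only [Finset.mem_Icc]; constructor <;> nlinarith
  have red_iff (k) (hk : k ≤ 7) :
      c (a + k * q) = red ↔ a + k * q ∈ ({a + q, a + 2 * q, a + 4 * q} : Finset ℕ) := by
    simp [← hred, mem k hk]
  have blue_iff (k) (hk : k ≤ 7) :
      c (a + k * q) = blue ↔ a + k * q ∈ ({a + 3 * q, a + 5 * q, a + 6 * q} : Finset ℕ) := by
    simp [← hblue, mem k hk]
  have hr1 : c (a + 1 * q) = red := (red_iff 1 (by norm_num)).2 (by simp)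
  have hb3 : c (a + 3 * q) = blue := (blue_iff 3 (by norm_num)).2 (by simp)
  refine ⟨red, blue, ?_, ?_, ?_, hr1, (red_iff 2 (by norm_num)).2 (by simp), hb3,
    (red_iff 4 (by norm_num)).2 (by simp), (blue_iff 5 (by norm_num)).2 (by simp),
    (blue_iff 6 (by norm_num)).2 (by simp), ?_, ?_⟩
  · intro h
    have := (blue_iff 1 (by norm_num)).1 (h ▸ hr1)
    simp only [Finset.mem_insert, Finset.mem_singleton] at this
    omega
  · intro (h : c (a + 0 * q) = red)
    have := h1 _ (mem 1 (by norm_num)) (by rw [hr1, ← h, zero_mul, add_zero])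
    omega
  · intro (h : c (a + 0 * q) = blue)
    have := h1 _ (mem 3 (by norm_num)) (by rw [hb3, ← h, zero_mul, add_zero])
    omega
  · intro h
    have := h2 _ (mem 1 (by norm_num)) (by rw [hr1, ← h])
    omega
  · intro h
    have := h2 _ (mem 3 (by norm_num)) (by rw [hb3, ← h])
    omega

theorem stmt15_general (n q n₁ : ℕ) (c : ℕ → ℕ) (red blue : ℕ)
    (hq : 1 ≤ q) (hn₁ : 1 ≤ n₁) (hle : n₁ + 7 * q ≤ n)
    (hnr : ¬ HasRainbowAP3 n c)
    (h1 : ∀ y ∈ Finset.Icc n₁ (n₁ + 7 * q), c y = c n₁ → y = n₁)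
    (h2 : ∀ y ∈ Finset.Icc n₁ (n₁ + 7 * q), c y = c (n₁ + 7 * q) → y = n₁ + 7 * q)
    (hred : (Finset.Icc n₁ (n₁ + 7 * q)).filter (fun x => c x = red) =
      {n₁ + q, n₁ + 2 * q, n₁ + 4 * q})
    (hblue : (Finset.Icc n₁ (n₁ + 7 * q)).filter (fun x => c x = blue) =
      {n₁ + 3 * q, n₁ + 5 * q, n₁ + 6 * q}) :
    n ≤ 9 * q - 1 := by
  by_contra hlt
  have hw := isSpecialWord_of_special_block hq h1 h2 hred hblue
  apply hnr
  rcases Nat.lt_or_ge q n₁ with hleft | hright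
  · have hshift : (fun k => c (n₁ - q + (k + 1) * q)) = fun k => c (n₁ + k * q) := by
      funext k; rw [add_mul, one_mul]; congr 1; omega
    obtain ⟨i, d, hd, hi, hrb⟩ :=
      IsSpecialWord.exists_isRainbowAP3_of_succ (v := fun k => c (n₁ - q + k * q)) (hshift ▸ hw)
    exact hasRainbowAP3_of_progression (by omega) hq (by omega) hd hi hrb
  · obtain ⟨i, d, hd, hi, hrb⟩ := hw.exists_isRainbowAP3
    exact hasRainbowAP3_of_progression hn₁ hq (by omega) hd hi hrb

/-- if an exact rainbow-free `r`-coloring of `[n]` is special on an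
interval `{n₁, …, n₁ + 7q}` containing all `r` colors, then `n ≤ 9q - 1`. -/
theorem stmt15 (n r q n₁ : ℕ) (c : ℕ → ℕ) (red blue : ℕ)
    (hq : 1 ≤ q) (hn₁ : 1 ≤ n₁) (hle : n₁ + 7 * q ≤ n)
    (hc : ExactColoring n r c) (hnr : ¬ HasRainbowAP3 n c)
    (hall : ∀ j ∈ Finset.Icc 1 r, ∃ x ∈ Finset.Icc n₁ (n₁ + 7 * q), c x = j)
    (h1 : ∀ y ∈ Finset.Icc n₁ (n₁ + 7 * q), c y = c n₁ → y = n₁)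
    (h2 : ∀ y ∈ Finset.Icc n₁ (n₁ + 7 * q), c y = c (n₁ + 7 * q) → y = n₁ + 7 * q)
    (hred : (Finset.Icc n₁ (n₁ + 7 * q)).filter (fun x => c x = red) =
      {n₁ + q, n₁ + 2 * q, n₁ + 4 * q})
    (hblue : (Finset.Icc n₁ (n₁ + 7 * q)).filter (fun x => c x = blue) =
      {n₁ + 3 * q, n₁ + 5 * q, n₁ + 6 * q}) :
    n ≤ 9 * q - 1 :=
  stmt15_general n q n₁ c red blue hq hn₁ hle hnr h1 h2 hred hblue
end
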